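/- Let (F,W) be a mixed Hodge structure on V with Deligne bigrading {I^{p,q}} and induced bigrading gl(V)^{r,s} := {α ∈ End(V) : α(I^{p,q}) ⊆ I^{p+r,q+s} for all p,q} of End(V). Then the nilpotent subalgebra λ_{(F,W)} := ⊕_{r<0, s<0} gl(V)^{r,s} is stable under the conjugation of End(V) induced by the rational structure: conj(λ_{(F,W)}) = λ_{(F,W)}. Consequently the subgroup exp(λ_{(F,W)}) ⊆ GL(V) is closed under conjugation. -/

import Mathlib

open Submodule

noncomputable section

instance : RingHomSurjective (starRingEnd ℂ) :=
  ⟨fun x => ⟨starRingEnd ℂ x, Complex.conj_conj x⟩⟩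

variable {V : Type*} [AddCommGroup V] [Module ℂ V]

/-- A finite decreasing filtration of `V` by complex subspaces. -/
def IsDecFilt (F : ℤ → Submodule ℂ V) : Prop :=
  (∀ p : ℤ, F (p + 1) ≤ F p) ∧ (∃ a : ℤ, F a = ⊤) ∧ ∃ b : ℤ, F b = ⊥

/-- A finite increasing filtration of `V` by complex subspaces. -/
def IsIncFilt (W : ℤ → Submodule ℂ V) : Prop :=
  (∀ k : ℤ, W k ≤ W (k + 1)) ∧ (∃ a : ℤ, W a = ⊥) ∧ ∃ b : ℤ, W b = ⊤

/-- The subspace `F^p ∩ W_k + W_{k-1}` of `V`, representing the `p`-th piece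
`F^p Gr^W_k` of the induced filtration on `Gr^W_k = W_k/W_{k-1}`. -/
def grF (F W : ℤ → Submodule ℂ V) (k p : ℤ) : Submodule ℂ V :=
  F p ⊓ W k ⊔ W (k - 1)

/-- The subspace of `V` representing the Hodge piece
`H^{p,k-p} = F^p Gr^W_k ∩ conj (F^{k-p} Gr^W_k)` of `Gr^W_k`. -/
def grH (σ : V →ₛₗ[starRingEnd ℂ] V) (F W : ℤ → Submodule ℂ V) (k p : ℤ) : Submodule ℂ V :=
  grF F W k p ⊓ grF (fun q => (F q).map σ) W k (k - p)

/-- The filtration induced by `F` on `Gr^W_k` is a pure Hodge structure of weight `k`: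
the pieces `H^{p,k-p}` span `Gr^W_k` and are independent there (all subspaces of the
quotient are represented by their preimages in `V`, which contain `W_{k-1}`). -/
def IsPureOnGr (σ : V →ₛₗ[starRingEnd ℂ] V) (F W : ℤ → Submodule ℂ V) (k : ℤ) : Prop :=
  (⨆ p : ℤ, grH σ F W k p) = W k ∧
  ∀ p : ℤ, grH σ F W k p ⊓ (⨆ (q : ℤ) (_ : q ≠ p), grH σ F W k q) = W (k - 1)

/-- `(F, W)` is a mixed Hodge structure on `V` (relative to the conjugation `σ`). -/
def IsMHS (σ : V →ₛₗ[starRingEnd ℂ] V) (F W : ℤ → Submodule ℂ V) : Prop :=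
  IsDecFilt F ∧ IsIncFilt W ∧ (∀ k : ℤ, (W k).map σ = W k) ∧ ∀ k : ℤ, IsPureOnGr σ F W k

/-- `I` is a bigrading of the mixed Hodge structure `(F, W)`. -/
def IsBigrading (F W : ℤ → Submodule ℂ V) (I : ℤ → ℤ → Submodule ℂ V) : Prop :=
  DirectSum.IsInternal (fun pq : ℤ × ℤ => I pq.1 pq.2) ∧
  (∀ p : ℤ, F p = ⨆ (rs : ℤ × ℤ) (_ : p ≤ rs.1), I rs.1 rs.2) ∧
  ∀ k : ℤ, W k = ⨆ (rs : ℤ × ℤ) (_ : rs.1 + rs.2 ≤ k), I rs.1 rs.2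

/-- `⊕_{r < p, s < q} I^{r,s}`. -/
def lowPart (I : ℤ → ℤ → Submodule ℂ V) (p q : ℤ) : Submodule ℂ V :=
  ⨆ (rs : ℤ × ℤ) (_ : rs.1 < p ∧ rs.2 < q), I rs.1 rs.2

/-- `I` is a bigrading of `(F, W)` satisfying the Deligne conjugation-symmetry
condition `I^{p,q} ≡ conj (I^{q,p}) mod ⊕_{r<p,s<q} I^{r,s}` (equality of images in the
quotient by `⊕_{r<p,s<q} I^{r,s}`). -/
def IsDeligne (σ : V →ₛₗ[starRingEnd ℂ] V) (F W : ℤ → Submodule ℂ V)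
    (I : ℤ → ℤ → Submodule ℂ V) : Prop :=
  IsBigrading F W I ∧
  ∀ p q : ℤ, I p q ⊔ lowPart I p q = (I q p).map σ ⊔ lowPart I p q

/-- The subspace of `End(V)` of endomorphisms mapping `P` into `Q`. -/
def mapsInto (P Q : Submodule ℂ V) : Submodule ℂ (Module.End ℂ V) where
  carrier := {α | ∀ v ∈ P, α v ∈ Q}
  add_mem' := by
    intro a b ha hb v hv
    have h : (a + b) v = a v + b v := rfl
    rw [h]
    exact Q.add_mem (ha v hv) (hb v hv)
  zero_mem' := by
    intro v hv
    show (0 : Module.End ℂ V) v ∈ Q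
    simp
  smul_mem' := by
    intro c a ha v hv
    have h : (c • a) v = c • a v := rfl
    rw [h]
    exact Q.smul_mem c (ha v hv)

/-- Conjugation on `End(V)` induced by the conjugation `σ` of `V`:
`α ↦ σ ∘ α ∘ σ`. -/
def conjEnd (σ : V →ₛₗ[starRingEnd ℂ] V) (α : Module.End ℂ V) : Module.End ℂ V where
  toFun v := σ (α (σ v))
  map_add' x y := by simp
  map_smul' c v := by simp [map_smulₛₗ]

/-- Conjugation on `End(V)` as an antilinear map. -/
def conjEndSL (σ : V →ₛₗ[starRingEnd ℂ] V) :
    Module.End ℂ V →ₛₗ[starRingEnd ℂ] Module.End ℂ V where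
  toFun := conjEnd σ
  map_add' α β := by
    ext v
    simp [conjEnd]
  map_smul' c α := by
    ext v
    simp [conjEnd]

/-- `gl(V)^{r,s}` relative to a bigrading `I` of `V`: endomorphisms with
`α(I^{p,q}) ⊆ I^{p+r,q+s}` for all `p, q`. -/
def endShiftI (I : ℤ → ℤ → Submodule ℂ V) (r s : ℤ) : Submodule ℂ (Module.End ℂ V) :=
  ⨅ pq : ℤ × ℤ, mapsInto (I pq.1 pq.2) (I (pq.1 + r) (pq.2 + s))

/-- The exponential of a (nilpotent) endomorphism of a finite-dimensional space,
as the truncated exponential series. -/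
def expEnd [FiniteDimensional ℂ V] (α : Module.End ℂ V) : Module.End ℂ V :=
  ∑ i ∈ Finset.range (Module.finrank ℂ V + 1), ((i.factorial : ℂ)⁻¹) • α ^ i

/-- `λ_{(F,W)} = ⊕_{r<0, s<0} gl(V)^{r,s}`. -/
def lamFW (I : ℤ → ℤ → Submodule ℂ V) : Submodule ℂ (Module.End ℂ V) :=
  ⨆ (rs : ℤ × ℤ) (_ : rs.1 < 0 ∧ rs.2 < 0), endShiftI I rs.1 rs.2

/-! ### Auxiliary lemmas -/

lemma mem_mapsInto {P Q : Submodule ℂ V} {α : Module.End ℂ V} :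
    α ∈ mapsInto P Q ↔ ∀ v ∈ P, α v ∈ Q := Iff.rfl

/-- `⊕_{r ≤ p, s ≤ q} I^{r,s}`. -/
def uppLe (I : ℤ → ℤ → Submodule ℂ V) (p q : ℤ) : Submodule ℂ V :=
  ⨆ (rs : ℤ × ℤ) (_ : rs.1 ≤ p ∧ rs.2 ≤ q), I rs.1 rs.2

lemma le_lowPart {I : ℤ → ℤ → Submodule ℂ V} {r s p q : ℤ} (h1 : r < p) (h2 : s < q) :
    I r s ≤ lowPart I p q :=
  le_iSup₂_of_le (r, s) ⟨h1, h2⟩ le_rfl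

lemma le_uppLe {I : ℤ → ℤ → Submodule ℂ V} {r s p q : ℤ} (h1 : r ≤ p) (h2 : s ≤ q) :
    I r s ≤ uppLe I p q :=
  le_iSup₂_of_le (r, s) ⟨h1, h2⟩ le_rfl

lemma lowPart_mono {I : ℤ → ℤ → Submodule ℂ V} {p q p' q' : ℤ} (h1 : p ≤ p') (h2 : q ≤ q') :
    lowPart I p q ≤ lowPart I p' q' :=
  iSup₂_le fun rs hrs => le_lowPart (lt_of_lt_of_le hrs.1 h1) (lt_of_lt_of_le hrs.2 h2)

lemma uppLe_le_lowPart {I : ℤ → ℤ → Submodule ℂ V} {p q p' q' : ℤ} (h1 : p < p') (h2 : q < q') :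
    uppLe I p q ≤ lowPart I p' q' :=
  iSup₂_le fun rs hrs => le_lowPart (lt_of_le_of_lt hrs.1 h1) (lt_of_le_of_lt hrs.2 h2)

/-- Endomorphisms mapping each `I^{p,q}` into `⊕_{r<p,s<q} I^{r,s}`. -/
def negPart (I : ℤ → ℤ → Submodule ℂ V) : Submodule ℂ (Module.End ℂ V) :=
  ⨅ pq : ℤ × ℤ, mapsInto (I pq.1 pq.2) (lowPart I pq.1 pq.2)

lemma lamFW_le_negPart (I : ℤ → ℤ → Submodule ℂ V) : lamFW I ≤ negPart I := by
  refine iSup₂_le fun rs hrs => le_iInf fun pq => ?_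
  intro α hα v hv
  have h := (Submodule.mem_iInf _).mp hα pq v hv
  exact le_lowPart (by omega) (by omega) h

lemma map_I_le_uppLe {σ : V →ₛₗ[starRingEnd ℂ] V} {F W : ℤ → Submodule ℂ V}
    {I : ℤ → ℤ → Submodule ℂ V} (hI : IsDeligne σ F W I) (p q : ℤ) :
    (I p q).map σ ≤ uppLe I q p := by
  have h := (hI.2 q p).symm
  calc (I p q).map σ ≤ (I p q).map σ ⊔ lowPart I q p := le_sup_left
    _ = I q p ⊔ lowPart I q p := h
    _ ≤ uppLe I q p := sup_le (le_uppLe le_rfl le_rfl)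
        (iSup₂_le fun rs hrs => le_uppLe hrs.1.le hrs.2.le)

lemma map_lowPart_le {σ : V →ₛₗ[starRingEnd ℂ] V} {F W : ℤ → Submodule ℂ V}
    {I : ℤ → ℤ → Submodule ℂ V} (hI : IsDeligne σ F W I) (p q : ℤ) :
    (lowPart I p q).map σ ≤ lowPart I q p := by
  rw [lowPart, Submodule.map_iSup]
  refine iSup_le fun rs => ?_
  rw [Submodule.map_iSup]
  refine iSup_le fun hrs => ?_
  calc (I rs.1 rs.2).map σ ≤ uppLe I rs.2 rs.1 := map_I_le_uppLe hI _ _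
    _ ≤ lowPart I q p := uppLe_le_lowPart hrs.2 hrs.1

lemma negPart_maps_uppLe {I : ℤ → ℤ → Submodule ℂ V} {α : Module.End ℂ V}
    (hα : α ∈ negPart I) (p q : ℤ) : uppLe I p q ≤ (lowPart I p q).comap α := by
  refine iSup₂_le fun rs hrs v hv => ?_
  have h := (Submodule.mem_iInf _).mp hα rs v hv
  exact lowPart_mono hrs.1 hrs.2 h

lemma conj_mem_negPart {σ : V →ₛₗ[starRingEnd ℂ] V} {F W : ℤ → Submodule ℂ V}
    {I : ℤ → ℤ → Submodule ℂ V} (hI : IsDeligne σ F W I) {α : Module.End ℂ V}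
    (hα : α ∈ negPart I) : conjEnd σ α ∈ negPart I := by
  refine (Submodule.mem_iInf _).mpr fun pq v hv => ?_
  show σ (α (σ v)) ∈ lowPart I pq.1 pq.2
  have h1 : σ v ∈ uppLe I pq.2 pq.1 :=
    map_I_le_uppLe hI pq.1 pq.2 (Submodule.mem_map_of_mem hv)
  have h2 : α (σ v) ∈ lowPart I pq.2 pq.1 := negPart_maps_uppLe hα pq.2 pq.1 h1
  exact map_lowPart_le hI pq.2 pq.1 (Submodule.mem_map_of_mem h2)

lemma negPart_le_lamFW [FiniteDimensional ℂ V] {I : ℤ → ℤ → Submodule ℂ V}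
    (hint : DirectSum.IsInternal fun pq : ℤ × ℤ => I pq.1 pq.2) :
    negPart I ≤ lamFW I := by
  classical
  set A : ℤ × ℤ → Submodule ℂ V := fun pq => I pq.1 pq.2 with hA
  set e := LinearEquiv.ofBijective (DirectSum.coeLinearMap A) hint with he
  set P : ℤ × ℤ → Module.End ℂ V := fun a =>
    (A a).subtype ∘ₗ (DirectSum.component ℂ (ℤ × ℤ) (fun pq => A pq) a) ∘ₗ
      e.symm.toLinearMap with hP
  have hPapply : ∀ a v, P a v = ((e.symm v) a : V) := fun a v => rfl
  have hPmem : ∀ a v, P a v ∈ A a := fun a v => ((e.symm v) a).2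
  have hPsame : ∀ a v, v ∈ A a → P a v = v := by
    intro a v hv
    rw [hPapply, hint.ofBijective_coeLinearMap_of_mem hv]
  have hPne : ∀ a b v, v ∈ A b → b ≠ a → P a v = 0 := by
    intro a b v hv hne
    rw [hPapply, hint.ofBijective_coeLinearMap_of_mem_ne hne hv]
    rfl
  obtain ⟨S, hS⟩ : ∃ S : Finset (ℤ × ℤ), ∀ a ∉ S, A a = ⊥ := by
    refine ⟨(Submodule.finite_ne_bot_of_iSupIndep hint.submodule_iSupIndep).toFinset, ?_⟩
    intro a ha
    by_contra hbot
    exact ha (Set.Finite.mem_toFinset _ |>.mpr hbot)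
  have hsum : ∀ v, ∑ a ∈ S, P a v = v := by
    intro v
    have hv : v ∈ ⨆ a, A a := hint.submodule_iSup_eq_top ▸ Submodule.mem_top
    refine Submodule.iSup_induction A (motive := fun x => ∑ a ∈ S, P a x = x) hv ?_ ?_ ?_
    · intro b x hx
      by_cases hb : b ∈ S
      · rw [Finset.sum_eq_single_of_mem b hb
          (fun a ha hne => hPne a b x hx hne.symm), hPsame b x hx]
      · have : x = 0 := by simpa [hS b hb] using hx
        simp [this]
    · simp
    · intro x y hx hy
      simp only [map_add, Finset.sum_add_distrib, hx, hy]
  intro α hα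
  have hrepr : α = ∑ a ∈ S, ∑ b ∈ S, P b * α * P a := by
    ext v
    simp only [LinearMap.coe_sum, Finset.sum_apply, Module.End.mul_apply]
    calc α v = α (∑ a ∈ S, P a v) := by rw [hsum]
      _ = ∑ a ∈ S, α (P a v) := map_sum α _ S
      _ = ∑ a ∈ S, ∑ b ∈ S, P b (α (P a v)) := by
          refine Finset.sum_congr rfl fun a _ => ?_
          rw [hsum]
  rw [hrepr]
  refine Submodule.sum_mem _ fun a _ => Submodule.sum_mem _ fun b _ => ?_
  by_cases hneg : b.1 < a.1 ∧ b.2 < a.2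
  · have hle : endShiftI I (b.1 - a.1) (b.2 - a.2) ≤ lamFW I :=
      le_iSup₂_of_le (b.1 - a.1, b.2 - a.2) ⟨by omega, by omega⟩ le_rfl
    refine hle ((Submodule.mem_iInf _).mpr fun pq v hv => ?_)
    show P b (α (P a v)) ∈ I (pq.1 + (b.1 - a.1)) (pq.2 + (b.2 - a.2))
    by_cases hpq : pq = a
    · subst hpq
      rw [show pq.1 + (b.1 - pq.1) = b.1 from by omega,
        show pq.2 + (b.2 - pq.2) = b.2 from by omega]
      exact hPmem b _
    · rw [hPne a pq v hv hpq, map_zero, map_zero]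
      exact Submodule.zero_mem _
  · have hz : P b * α * P a = 0 := by
      ext v
      show P b (α (P a v)) = 0
      have h1 : α (P a v) ∈ lowPart I a.1 a.2 :=
        (Submodule.mem_iInf _).mp hα a _ (hPmem a v)
      have hker : lowPart I a.1 a.2 ≤ LinearMap.ker (P b) := by
        refine iSup₂_le fun rs hrs v hv => ?_
        have hne : rs ≠ b := by
          rintro rfl
          exact hneg ⟨hrs.1, hrs.2⟩
        exact LinearMap.mem_ker.mpr (hPne b rs v hv hne)
      exact hker h1
    rw [hz]
    exact Submodule.zero_mem _

lemma conjEnd_mul {σ : V →ₛₗ[starRingEnd ℂ] V} (hσ : ∀ v, σ (σ v) = v)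
    (α β : Module.End ℂ V) :
    conjEnd σ (α * β) = conjEnd σ α * conjEnd σ β := by
  ext v
  show σ (α (β (σ v))) = σ (α (σ (σ (β (σ v)))))
  rw [hσ]

lemma conjEnd_one {σ : V →ₛₗ[starRingEnd ℂ] V} (hσ : ∀ v, σ (σ v) = v) :
    conjEnd σ (1 : Module.End ℂ V) = 1 := by
  ext v
  exact hσ v

lemma conjEnd_pow {σ : V →ₛₗ[starRingEnd ℂ] V} (hσ : ∀ v, σ (σ v) = v)
    (α : Module.End ℂ V) (n : ℕ) :
    conjEnd σ (α ^ n) = (conjEnd σ α) ^ n := by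
  induction n with
  | zero => simpa using conjEnd_one hσ
  | succ n ih => rw [pow_succ, conjEnd_mul hσ, ih, pow_succ]

lemma conjEnd_expEnd [FiniteDimensional ℂ V] {σ : V →ₛₗ[starRingEnd ℂ] V}
    (hσ : ∀ v, σ (σ v) = v) (α : Module.End ℂ V) :
    conjEnd σ (expEnd α) = expEnd (conjEnd σ α) := by
  have h : conjEnd σ (expEnd α) = conjEndSL σ (expEnd α) := rfl
  rw [h, expEnd, map_sum]
  refine Finset.sum_congr rfl fun i _ => ?_
  rw [map_smulₛₗ]
  have h2 : conjEndSL σ (α ^ i) = conjEnd σ (α ^ i) := rfl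
  rw [h2, conjEnd_pow hσ]
  congr 1
  simp

lemma conjEnd_involutive {σ : V →ₛₗ[starRingEnd ℂ] V} (hσ : ∀ v, σ (σ v) = v)
    (α : Module.End ℂ V) : conjEnd σ (conjEnd σ α) = α := by
  ext v
  show σ (σ (α (σ (σ v)))) = α v
  rw [hσ, hσ]

/-- The nilpotent subalgebra `λ_{(F,W)} = ⊕_{r<0,s<0} gl(V)^{r,s}`
is stable under conjugation, and consequently the subgroup `exp(λ_{(F,W)})` is closed
under conjugation. -/
theorem stmt_13 [FiniteDimensional ℂ V] [Module ℚ V] [IsScalarTower ℚ ℂ V]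
    (σ : V →ₛₗ[starRingEnd ℂ] V) (hσ : ∀ v, σ (σ v) = v)
    (VQ : Submodule ℚ V)
    (hQform : ∃ s : Set V, span ℚ s = VQ ∧ LinearIndependent ℂ ((↑) : s → V) ∧
      span ℂ s = ⊤)
    (hfix : ∀ v ∈ VQ, σ v = v)
    (F W : ℤ → Submodule ℂ V)
    (hWQ : ∀ k : ℤ, W k = span ℂ ((W k : Set V) ∩ (VQ : Set V)))
    (hMHS : IsMHS σ F W)
    (I : ℤ → ℤ → Submodule ℂ V) (hI : IsDeligne σ F W I) :
    (conjEnd σ '' (lamFW I : Set (Module.End ℂ V)) = (lamFW I : Set (Module.End ℂ V))) ∧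
    ∀ g : Module.End ℂ V, (∃ α ∈ lamFW I, g = expEnd α) →
      ∃ β ∈ lamFW I, conjEnd σ g = expEnd β := by
  have hint : DirectSum.IsInternal fun pq : ℤ × ℤ => I pq.1 pq.2 := hI.1.1
  have hstable : ∀ α ∈ lamFW I, conjEnd σ α ∈ lamFW I := fun α hα =>
    negPart_le_lamFW hint (conj_mem_negPart hI (lamFW_le_negPart I hα))
  constructor
  · apply Set.Subset.antisymm
    · rintro _ ⟨α, hα, rfl⟩
      exact hstable α hα
    · intro α hα
      exact ⟨conjEnd σ α, hstable α hα, conjEnd_involutive hσ α⟩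
  · rintro g ⟨α, hα, rfl⟩
    exact ⟨conjEnd σ α, hstable α hα, conjEnd_expEnd hσ α⟩
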